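/- Let P be a symmetric positive semidefinite n×n matrix such that R(P) := BᵀPB + σ²·B̄ᵀPB̄ is positive definite. Then Φ(P) is symmetric positive semidefinite, Φ(P) ⪯ AᵀPA + σ²·ĀᵀPĀ, and Tr Φ(P) ≤ λ_max(AAᵀ + σ²·ĀĀᵀ)·Tr P. -/

import Mathlib

open Matrix MeasureTheory ProbabilityTheory
open scoped ENNReal Classical

noncomputable section

namespace SCS

/-! ### Matrix-analytic definitions -/

/-- Rayleigh-quotient definition of the largest eigenvalue of a symmetric matrix. -/
def lamMax {n : ℕ} (M : Matrix (Fin n) (Fin n) ℝ) : ℝ :=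
  ⨆ x : {x : Fin n → ℝ // x ⬝ᵥ x = 1}, x.1 ⬝ᵥ M.mulVec x.1

/-- Rayleigh-quotient definition of the smallest eigenvalue of a symmetric matrix. -/
def lamMin {n : ℕ} (M : Matrix (Fin n) (Fin n) ℝ) : ℝ :=
  ⨅ x : {x : Fin n → ℝ // x ⬝ᵥ x = 1}, x.1 ⬝ᵥ M.mulVec x.1

/-- Spectral norm (the operator norm induced by the Euclidean norm). -/
def specNorm {p q : ℕ} (M : Matrix (Fin p) (Fin q) ℝ) : ℝ :=
  Real.sqrt (lamMax (Mᵀ * M))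

variable {n m : ℕ}

/-- `R(P) = BᵀPB + σ²·B̄ᵀPB̄`. -/
def Rop (σ : ℝ) (B Bbar : Matrix (Fin n) (Fin m) ℝ) (P : Matrix (Fin n) (Fin n) ℝ) :
    Matrix (Fin m) (Fin m) ℝ :=
  Bᵀ * P * B + σ ^ 2 • (Bbarᵀ * P * Bbar)

/-- `S(P) = AᵀPB + σ²·ĀᵀPB̄`. -/
def Sop (σ : ℝ) (A Abar : Matrix (Fin n) (Fin n) ℝ) (B Bbar : Matrix (Fin n) (Fin m) ℝ)
    (P : Matrix (Fin n) (Fin n) ℝ) : Matrix (Fin n) (Fin m) ℝ :=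
  Aᵀ * P * B + σ ^ 2 • (Abarᵀ * P * Bbar)

/-- `Φ(P) = AᵀPA + σ²·ĀᵀPĀ − S(P)·R(P)⁻¹·S(P)ᵀ`. -/
def Phi (σ : ℝ) (A Abar : Matrix (Fin n) (Fin n) ℝ) (B Bbar : Matrix (Fin n) (Fin m) ℝ)
    (P : Matrix (Fin n) (Fin n) ℝ) : Matrix (Fin n) (Fin n) ℝ :=
  Aᵀ * P * A + σ ^ 2 • (Abarᵀ * P * Abar)
    - Sop σ A Abar B Bbar P * (Rop σ B Bbar P)⁻¹ * (Sop σ A Abar B Bbar P)ᵀ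

/-- `K(P) = R(P)⁻¹·S(P)ᵀ`. -/
def Kgain (σ : ℝ) (A Abar : Matrix (Fin n) (Fin n) ℝ) (B Bbar : Matrix (Fin n) (Fin m) ℝ)
    (P : Matrix (Fin n) (Fin n) ℝ) : Matrix (Fin m) (Fin n) ℝ :=
  (Rop σ B Bbar P)⁻¹ * (Sop σ A Abar B Bbar P)ᵀ

/-- `C_A = λ_max(AAᵀ + σ²·ĀĀᵀ)`. -/
def CA (σ : ℝ) (A Abar : Matrix (Fin n) (Fin n) ℝ) : ℝ :=
  lamMax (A * Aᵀ + σ ^ 2 • (Abar * Abarᵀ))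

/-- `δ_τ = (τ/n)/((1−τ)·C_A + τ)`. -/
def deltaTau (σ : ℝ) (A Abar : Matrix (Fin n) (Fin n) ℝ) (τ : ℝ) : ℝ :=
  (τ / (n : ℝ)) / ((1 - τ) * CA σ A Abar + τ)

/-- The regularized normalized operator
`Φ̂_τ(P) = ((1−τ)·Φ(P) + (τ/n)·I) / Tr((1−τ)·Φ(P) + (τ/n)·I)`. -/
def PhiHat (σ : ℝ) (A Abar : Matrix (Fin n) (Fin n) ℝ) (B Bbar : Matrix (Fin n) (Fin m) ℝ)
    (τ : ℝ) (P : Matrix (Fin n) (Fin n) ℝ) : Matrix (Fin n) (Fin n) ℝ :=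
  (Matrix.trace ((1 - τ) • Phi σ A Abar B Bbar P
      + (τ / (n : ℝ)) • (1 : Matrix (Fin n) (Fin n) ℝ)))⁻¹ •
    ((1 - τ) • Phi σ A Abar B Bbar P + (τ / (n : ℝ)) • (1 : Matrix (Fin n) (Fin n) ℝ))

/-- Inverse of the positive-semidefinite square root (junk value `0` off the PSD cone),
so `invSqrt P = P^{−1/2}` for positive definite `P`. -/
def invSqrt {n : ℕ} (P : Matrix (Fin n) (Fin n) ℝ) : Matrix (Fin n) (Fin n) ℝ :=
  if h : P.PosSemidef then
    (h.1.eigenvectorUnitary.1 * diagonal ((↑) ∘ (h.1.eigenvalues · |>.sqrt))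
      * (star h.1.eigenvectorUnitary : Matrix (Fin n) (Fin n) ℝ))⁻¹ else 0

/-- `L(P) = λ_min(P^{−1/2}·Φ(P)·P^{−1/2})`. -/
def Lval (σ : ℝ) (A Abar : Matrix (Fin n) (Fin n) ℝ) (B Bbar : Matrix (Fin n) (Fin m) ℝ)
    (P : Matrix (Fin n) (Fin n) ℝ) : ℝ :=
  lamMin (invSqrt P * Phi σ A Abar B Bbar P * invSqrt P)

/-- `U(P) = λ_max(P^{−1/2}·Φ(P)·P^{−1/2})`. -/
def Uval (σ : ℝ) (A Abar : Matrix (Fin n) (Fin n) ℝ) (B Bbar : Matrix (Fin n) (Fin m) ℝ)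
    (P : Matrix (Fin n) (Fin n) ℝ) : ℝ :=
  lamMax (invSqrt P * Phi σ A Abar B Bbar P * invSqrt P)

/-- The trace-normalized slice `S_a = {X symmetric : X ⪰ a·I, Tr X = 1}`. -/
def Slice (a : ℝ) : Set (Matrix (Fin n) (Fin n) ℝ) :=
  {X | X.IsSymm ∧ (X - a • (1 : Matrix (Fin n) (Fin n) ℝ)).PosSemidef ∧ X.trace = 1}

/-- `α_A = ‖A‖² + σ²·‖Ā‖²` (spectral norms). -/
def alphaA (σ : ℝ) (A Abar : Matrix (Fin n) (Fin n) ℝ) : ℝ :=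
  specNorm A ^ 2 + σ ^ 2 * specNorm Abar ^ 2

/-- `α_S = ‖A‖·‖B‖ + σ²·‖Ā‖·‖B̄‖`. -/
def alphaS (σ : ℝ) (A Abar : Matrix (Fin n) (Fin n) ℝ) (B Bbar : Matrix (Fin n) (Fin m) ℝ) : ℝ :=
  specNorm A * specNorm B + σ ^ 2 * specNorm Abar * specNorm Bbar

/-- `α_R = ‖B‖² + σ²·‖B̄‖²`. -/
def alphaR (σ : ℝ) (B Bbar : Matrix (Fin n) (Fin m) ℝ) : ℝ :=
  specNorm B ^ 2 + σ ^ 2 * specNorm Bbar ^ 2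

/-- `c_R(a) = 1/(a·λ_min(R₀))`. -/
def cR (σ : ℝ) (B Bbar : Matrix (Fin n) (Fin m) ℝ) (a : ℝ) : ℝ :=
  1 / (a * lamMin (Bᵀ * B + σ ^ 2 • (Bbarᵀ * Bbar)))

/-- `L_Φ(a) = α_A + 2·α_S²·c_R(a) + α_S²·α_R·c_R(a)²`. -/
def LPhi (σ : ℝ) (A Abar : Matrix (Fin n) (Fin n) ℝ) (B Bbar : Matrix (Fin n) (Fin m) ℝ)
    (a : ℝ) : ℝ :=
  alphaA σ A Abar + 2 * alphaS σ A Abar B Bbar ^ 2 * cR σ B Bbar a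
    + alphaS σ A Abar B Bbar ^ 2 * alphaR σ B Bbar * cR σ B Bbar a ^ 2

/-- `C_Φ(a) = α_A + α_S²·c_R(a)`. -/
def CPhi (σ : ℝ) (A Abar : Matrix (Fin n) (Fin n) ℝ) (B Bbar : Matrix (Fin n) (Fin m) ℝ)
    (a : ℝ) : ℝ :=
  alphaA σ A Abar + alphaS σ A Abar B Bbar ^ 2 * cR σ B Bbar a

/-- The contraction modulus `Λ(τ)`. -/
def LambdaTau (σ : ℝ) (A Abar : Matrix (Fin n) (Fin n) ℝ) (B Bbar : Matrix (Fin n) (Fin m) ℝ)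
    (τ : ℝ) : ℝ :=
  (1 - τ) * LPhi σ A Abar B Bbar (deltaTau σ A Abar τ) / τ
    + (1 - τ) * ((1 - τ) * CPhi σ A Abar B Bbar (deltaTau σ A Abar τ) + τ / (n : ℝ))
        * (n : ℝ) * LPhi σ A Abar B Bbar (deltaTau σ A Abar τ) / τ ^ 2

/-- The directional derivative `DΦ(P)[H]`. -/
def DPhi (σ : ℝ) (A Abar : Matrix (Fin n) (Fin n) ℝ) (B Bbar : Matrix (Fin n) (Fin m) ℝ)
    (P H : Matrix (Fin n) (Fin n) ℝ) : Matrix (Fin n) (Fin n) ℝ :=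
  Aᵀ * H * A + σ ^ 2 • (Abarᵀ * H * Abar)
    - (Aᵀ * H * B + σ ^ 2 • (Abarᵀ * H * Bbar)) * (Rop σ B Bbar P)⁻¹ * (Sop σ A Abar B Bbar P)ᵀ
    - Sop σ A Abar B Bbar P * (Rop σ B Bbar P)⁻¹ * (Bᵀ * H * A + σ ^ 2 • (Bbarᵀ * H * Abar))
    + Sop σ A Abar B Bbar P * (Rop σ B Bbar P)⁻¹ * (Bᵀ * H * B + σ ^ 2 • (Bbarᵀ * H * Bbar))
        * (Rop σ B Bbar P)⁻¹ * (Sop σ A Abar B Bbar P)ᵀ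

/-- `s_τ(P) = Tr((1−τ)·Φ(P) + (τ/n)·I)`. -/
def sTau (σ : ℝ) (A Abar : Matrix (Fin n) (Fin n) ℝ) (B Bbar : Matrix (Fin n) (Fin m) ℝ)
    (τ : ℝ) (P : Matrix (Fin n) (Fin n) ℝ) : ℝ :=
  Matrix.trace ((1 - τ) • Phi σ A Abar B Bbar P + (τ / (n : ℝ)) • (1 : Matrix (Fin n) (Fin n) ℝ))

/-- The directional derivative
`DΦ̂_τ(P)[H] = ((1−τ)/s_τ(P))·(DΦ(P)[H] − Φ̂_τ(P)·Tr(DΦ(P)[H]))`. -/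
def DPhiHat (σ : ℝ) (A Abar : Matrix (Fin n) (Fin n) ℝ) (B Bbar : Matrix (Fin n) (Fin m) ℝ)
    (τ : ℝ) (P H : Matrix (Fin n) (Fin n) ℝ) : Matrix (Fin n) (Fin n) ℝ :=
  ((1 - τ) / sTau σ A Abar B Bbar τ P) •
    (DPhi σ A Abar B Bbar P H
      - Matrix.trace (DPhi σ A Abar B Bbar P H) • PhiHat σ A Abar B Bbar τ P)

/-- The local Lipschitz modulus `Lip(P,τ) = sup{‖DΦ̂_τ(P)[H]‖ : H symmetric, ‖H‖ = 1}`. -/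
def LipMod (σ : ℝ) (A Abar : Matrix (Fin n) (Fin n) ℝ) (B Bbar : Matrix (Fin n) (Fin m) ℝ)
    (τ : ℝ) (P : Matrix (Fin n) (Fin n) ℝ) : ℝ :=
  ⨆ H : {H : Matrix (Fin n) (Fin n) ℝ // H.IsSymm ∧ specNorm H = 1},
    specNorm (DPhiHat σ A Abar B Bbar τ P H.1)

/-! ### Probabilistic definitions -/

/-- The Gaussian measure on `ℝ` with mean `0` and variance `σ²`. -/
def gauss (σ : ℝ) : Measure ℝ := gaussianReal 0 ⟨σ ^ 2, sq_nonneg σ⟩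

/-- The Gaussian expectation `E_ω[((A+Āω)x + (B+B̄ω)v)ᵀ·P·((A+Āω)x + (B+B̄ω)v)]`. -/
def qform (σ : ℝ) (A Abar : Matrix (Fin n) (Fin n) ℝ) (B Bbar : Matrix (Fin n) (Fin m) ℝ)
    (P : Matrix (Fin n) (Fin n) ℝ) (x : Fin n → ℝ) (v : Fin m → ℝ) : ℝ :=
  ∫ s, (((A + s • Abar).mulVec x + (B + s • Bbar).mulVec v) ⬝ᵥ
      P.mulVec ((A + s • Abar).mulVec x + (B + s • Bbar).mulVec v)) ∂(gauss σ)

/-- The data of the stochastic control system: a probability space `(Ω, F, Pr)`,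
system matrices `A, Ā, B, B̄`, a noise level `σ > 0`, an i.i.d. sequence `w` of
Gaussian random variables with mean `0` and variance `σ²`, and a sub-σ-algebra `G`
independent of the noise. -/
structure Ctx (n m : ℕ) (Ω : Type) [mΩ : MeasurableSpace Ω] where
  Pr : Measure Ω
  isProb : IsProbabilityMeasure Pr
  σ : ℝ
  hσ : 0 < σ
  A : Matrix (Fin n) (Fin n) ℝ
  Abar : Matrix (Fin n) (Fin n) ℝ
  B : Matrix (Fin n) (Fin m) ℝ
  Bbar : Matrix (Fin n) (Fin m) ℝ
  w : ℕ → Ω → ℝ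
  hw_meas : ∀ k, Measurable (w k)
  hw_gauss : ∀ k, Pr.map (w k) = gauss σ
  hw_iid : iIndepFun w Pr
  G : MeasurableSpace Ω
  hG : G ≤ mΩ
  hw_indep_G : Indep (⨆ k, MeasurableSpace.comap (w k) inferInstance) G Pr

variable {Ω : Type} [MeasurableSpace Ω]

/-- The filtration `F_k = G ∨ σ(ω₀, …, ω_{k−1})`. -/
def Ctx.Fk (C : Ctx n m Ω) (k : ℕ) : MeasurableSpace Ω :=
  C.G ⊔ ⨆ i ∈ Finset.range k, MeasurableSpace.comap (C.w i) inferInstance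

/-- Admissible policies: `u_k` is `F_k`-measurable and square-integrable. -/
def Ctx.Admissible (C : Ctx n m Ω) (u : ℕ → Ω → Fin m → ℝ) : Prop :=
  ∀ k, Measurable[C.Fk k] (u k) ∧ MemLp (u k) 2 C.Pr

/-- Admissible initial states: `G`-measurable and square-integrable. -/
def Ctx.InitOK (C : Ctx n m Ω) (x : Ω → Fin n → ℝ) : Prop :=
  Measurable[C.G] x ∧ MemLp x 2 C.Pr

/-- The state trajectory `x_{k+1} = (A + Ā·ω_k)x_k + (B + B̄·ω_k)u_k`. -/
def Ctx.traj (C : Ctx n m Ω) (x0 : Ω → Fin n → ℝ) (u : ℕ → Ω → Fin m → ℝ) :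
    ℕ → Ω → Fin n → ℝ
  | 0 => x0
  | k + 1 => fun s =>
      (C.A + C.w k s • C.Abar).mulVec (C.traj x0 u k s)
      + (C.B + C.w k s • C.Bbar).mulVec (u k s)

/-- `E[xᵀx]`. -/
def msSq {n : ℕ} (Pr : Measure Ω) (x : Ω → Fin n → ℝ) : ℝ := ∫ s, x s ⬝ᵥ x s ∂Pr

/-- The mean-square norm `‖x‖_ms = (E[xᵀx])^{1/2}`. -/
def msNorm {n : ℕ} (Pr : Measure Ω) (x : Ω → Fin n → ℝ) : ℝ := Real.sqrt (msSq Pr x)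

/-- The mean-square stabilizing rate `ρ(u)` of a policy. -/
def Ctx.rate (C : Ctx n m Ω) (u : ℕ → Ω → Fin m → ℝ) : ℝ :=
  sInf {ρ : ℝ | 0 ≤ ρ ∧ ∃ κ : ℝ, 0 ≤ κ ∧ ∀ x0, C.InitOK x0 → ∀ k : ℕ,
    msSq C.Pr (C.traj x0 u k) ≤ κ * ρ ^ (2 * k) * msSq C.Pr x0}

/-- The optimal stabilizing rate `ρ* = inf_{u ∈ U} ρ(u)`. -/
def Ctx.rhoStar (C : Ctx n m Ω) : ℝ :=
  sInf {r : ℝ | ∃ u, C.Admissible u ∧ r = C.rate u}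

/-- `η(x) = inf_{u ∈ U} sup_{k ∈ ℕ} ‖x_k‖_ms/(ρ*)^k` (with values in `[0,∞]`). -/
def Ctx.eta (C : Ctx n m Ω) (x : Ω → Fin n → ℝ) : ℝ≥0∞ :=
  ⨅ (u : ℕ → Ω → Fin m → ℝ) (_ : C.Admissible u),
    ⨆ k : ℕ, ENNReal.ofReal (msNorm C.Pr (C.traj x u k) / C.rhoStar ^ k)

/-- The per-trajectory mean-square stabilizing rate `ρ(u; x₀)`. -/
def Ctx.rateAt (C : Ctx n m Ω) (x0 : Ω → Fin n → ℝ) (u : ℕ → Ω → Fin m → ℝ) : ℝ :=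
  sInf {ρ : ℝ | 0 ≤ ρ ∧ ∃ κ : ℝ, 0 ≤ κ ∧ ∀ k : ℕ,
    msSq C.Pr (C.traj x0 u k) ≤ κ * ρ ^ (2 * k) * msSq C.Pr x0}

/-- The cost `J(x₀,u) = limsup_k (1/k)·log(E[x_kᵀx_k]/E[x₀ᵀx₀])`. -/
def Ctx.J (C : Ctx n m Ω) (x0 : Ω → Fin n → ℝ) (u : ℕ → Ω → Fin m → ℝ) : ℝ :=
  Filter.limsup
    (fun k : ℕ => (1 / (k : ℝ)) * Real.log (msSq C.Pr (C.traj x0 u k) / msSq C.Pr x0))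
    Filter.atTop

/-- Feedback policies: `u_k = μ_k(x_k)` for Borel-measurable `μ_k`. -/
def Ctx.IsFeedback (C : Ctx n m Ω) (x0 : Ω → Fin n → ℝ) (u : ℕ → Ω → Fin m → ℝ) : Prop :=
  ∃ μ : ℕ → (Fin n → ℝ) → Fin m → ℝ, (∀ k, Measurable (μ k)) ∧
    ∀ k s, u k s = μ k (C.traj x0 u k s)

/-- The closed-loop trajectory under a stationary feedback law `μ`. -/
def Ctx.fbTraj (C : Ctx n m Ω) (x0 : Ω → Fin n → ℝ) (μ : (Fin n → ℝ) → Fin m → ℝ) :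
    ℕ → Ω → Fin n → ℝ
  | 0 => x0
  | k + 1 => fun s =>
      (C.A + C.w k s • C.Abar).mulVec (C.fbTraj x0 μ k s)
      + (C.B + C.w k s • C.Bbar).mulVec (μ (C.fbTraj x0 μ k s))

/-- The stationary policy `u* given by `u*_k = μ(x*_k)` along its own closed-loop
trajectory, for a stationary feedback law `μ`. -/
def Ctx.fbPolicy (C : Ctx n m Ω) (x0 : Ω → Fin n → ℝ) (μ : (Fin n → ℝ) → Fin m → ℝ) :
    ℕ → Ω → Fin m → ℝ :=
  fun k s => μ (C.fbTraj x0 μ k s)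

/-- The linear feedback policy `u*_k = −K·x*_k` along its own trajectory. -/
def Ctx.linFbPolicy (C : Ctx n m Ω) (x0 : Ω → Fin n → ℝ) (K : Matrix (Fin m) (Fin n) ℝ) :
    ℕ → Ω → Fin m → ℝ :=
  C.fbPolicy x0 (fun x => -(K.mulVec x))

/-- `ξ_♯(x) = inf_{v ∈ ℝ^m} ‖(A + Ā·ω)x + (B + B̄·ω)v‖_ms`, realized with `ω = ω₀`. -/
def Ctx.xiSharp (C : Ctx n m Ω) (x : Ω → Fin n → ℝ) : ℝ :=
  ⨅ v : Fin m → ℝ, msNorm C.Pr (fun s =>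
    (C.A + C.w 0 s • C.Abar).mulVec (x s) + (C.B + C.w 0 s • C.Bbar).mulVec v)

/-- Extended-real logarithm: `log t` for `t > 0` and `−∞` for `t ≤ 0`. -/
def elog (t : ℝ) : EReal := if t ≤ 0 then ⊥ else ((Real.log t : ℝ) : EReal)

/-- The cost `J(x₀,u)` interpreted with values in `[−∞,∞]`. -/
def Ctx.Je (C : Ctx n m Ω) (x0 : Ω → Fin n → ℝ) (u : ℕ → Ω → Fin m → ℝ) : EReal :=
  Filter.limsup
    (fun k : ℕ => ((1 / (k : ℝ) : ℝ) : EReal) * elog (msSq C.Pr (C.traj x0 u k) / msSq C.Pr x0))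
    Filter.atTop

/-!
Completing the square in the gain `K = R⁻¹Sᵀ` writes
`Φ(P) = (A − BK)ᵀP(A − BK) + σ²(Ā − B̄K)ᵀP(Ā − B̄K)`, a sum of congruences of `P`, hence
positive semidefinite, while `AᵀPA + σ²ĀᵀPĀ − Φ(P) = SR⁻¹Sᵀ` is positive semidefinite because
`R⁻¹` is. For the trace, `Tr(AᵀPA + σ²ĀᵀPĀ) = Tr(P(AAᵀ + σ²ĀĀᵀ))`; writing `P` as a sum of
rank-one matrices `vvᵀ`, each term `vᵀMv` is at most `λ_max(M)·vᵀv` by the Rayleigh quotient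
definition of `λ_max`.
-/

section RayleighQuotient

lemma bddAbove_rayleigh (M : Matrix (Fin n) (Fin n) ℝ) :
    BddAbove (Set.range fun x : {x : Fin n → ℝ // x ⬝ᵥ x = 1} => x.1 ⬝ᵥ M *ᵥ x.1) := by
  refine ⟨∑ i, ∑ j, |M i j|, ?_⟩
  rintro _ ⟨⟨x, hx⟩, rfl⟩
  have hx1 : ∀ i, |x i| ≤ 1 := fun i => by
    rw [← sq_le_one_iff_abs_le_one, sq, ← hx]
    exact Finset.single_le_sum (fun j _ => mul_self_nonneg (x j)) (Finset.mem_univ i)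
  calc x ⬝ᵥ M *ᵥ x = ∑ i, ∑ j, x i * M i j * x j := by
        simp only [dotProduct, mulVec, Finset.mul_sum, mul_assoc]
    _ ≤ ∑ i, ∑ j, |M i j| := by
        gcongr with i _ j _
        calc x i * M i j * x j ≤ |x i| * |M i j| * |x j| := by
              rw [← abs_mul, ← abs_mul]; exact le_abs_self _
          _ ≤ |M i j| :=
              mul_le_of_le_one_right (by positivity) (hx1 j) |>.trans
                (mul_le_of_le_one_left (abs_nonneg _) (hx1 i))

lemma dotProduct_mulVec_le_lamMax (M : Matrix (Fin n) (Fin n) ℝ) (y : Fin n → ℝ) :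
    y ⬝ᵥ M *ᵥ y ≤ lamMax M * (y ⬝ᵥ y) := by
  rcases eq_or_ne y 0 with rfl | hy
  · simp
  have hyy : 0 < y ⬝ᵥ y :=
    (Finset.sum_nonneg fun i _ => mul_self_nonneg (y i)).lt_of_ne'
      (dotProduct_self_eq_zero.not.mpr hy)
  set c := √(y ⬝ᵥ y)
  have hc : 0 < c := Real.sqrt_pos.mpr hyy
  have hcc : c * c = y ⬝ᵥ y := Real.mul_self_sqrt hyy.le
  have hunit : (c⁻¹ • y) ⬝ᵥ (c⁻¹ • y) = 1 := by
    rw [smul_dotProduct, dotProduct_smul, smul_eq_mul, smul_eq_mul, ← hcc]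
    field_simp
  have hle := le_ciSup (bddAbove_rayleigh M) ⟨c⁻¹ • y, hunit⟩
  simp only [mulVec_smul, smul_dotProduct, dotProduct_smul, smul_eq_mul] at hle
  rw [← hcc]
  calc y ⬝ᵥ M *ᵥ y = c * c * (c⁻¹ * (c⁻¹ * (y ⬝ᵥ M *ᵥ y))) := by field_simp
    _ ≤ c * c * lamMax M := by gcongr; exact hle
    _ = lamMax M * (c * c) := mul_comm _ _

lemma trace_mul_le_lamMax_mul_trace {P : Matrix (Fin n) (Fin n) ℝ} (hP : P.PosSemidef)
    (M : Matrix (Fin n) (Fin n) ℝ) : (P * M).trace ≤ lamMax M * P.trace := by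
  obtain ⟨k, v, rfl⟩ := posSemidef_iff_eq_sum_vecMulVec.mp hP
  simp only [Finset.sum_mul, trace_sum, Finset.mul_sum, vecMulVec_mul, trace_vecMulVec,
    star_trivial]
  gcongr with i
  rw [dotProduct_comm, ← dotProduct_mulVec]
  exact dotProduct_mulVec_le_lamMax M (v i)

end RayleighQuotient

section Riccati

variable (σ : ℝ) (A Abar : Matrix (Fin n) (Fin n) ℝ) (B Bbar : Matrix (Fin n) (Fin m) ℝ)

lemma Rop_isSymm {P : Matrix (Fin n) (Fin n) ℝ} (hP : P.IsSymm) : (Rop σ B Bbar P).IsSymm := by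
  simp only [IsSymm, Rop, transpose_add, transpose_smul, transpose_mul, transpose_transpose,
    hP.eq, Matrix.mul_assoc]

lemma closedLoop_eq {P : Matrix (Fin n) (Fin n) ℝ} (hP : P.IsSymm)
    (K : Matrix (Fin m) (Fin n) ℝ) :
    (A - B * K)ᵀ * P * (A - B * K) + σ ^ 2 • ((Abar - Bbar * K)ᵀ * P * (Abar - Bbar * K))
      = Aᵀ * P * A + σ ^ 2 • (Abarᵀ * P * Abar) - Sop σ A Abar B Bbar P * K
        - Kᵀ * (Sop σ A Abar B Bbar P)ᵀ + Kᵀ * Rop σ B Bbar P * K := by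
  simp only [Sop, Rop, transpose_sub, transpose_add, transpose_smul, transpose_mul,
    transpose_transpose, hP.eq, Matrix.sub_mul, Matrix.mul_sub, Matrix.add_mul, Matrix.mul_add,
    Matrix.smul_mul, Matrix.mul_smul, smul_sub, Matrix.mul_assoc]
  abel

lemma Phi_eq_closedLoop {P : Matrix (Fin n) (Fin n) ℝ} (hP : P.IsSymm)
    (hR : IsUnit (Rop σ B Bbar P).det) :
    Phi σ A Abar B Bbar P
      = (A - B * Kgain σ A Abar B Bbar P)ᵀ * P * (A - B * Kgain σ A Abar B Bbar P)
        + σ ^ 2 • ((Abar - Bbar * Kgain σ A Abar B Bbar P)ᵀ * P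
          * (Abar - Bbar * Kgain σ A Abar B Bbar P)) := by
  set R := Rop σ B Bbar P
  set S := Sop σ A Abar B Bbar P
  have hKt : (Kgain σ A Abar B Bbar P)ᵀ = S * R⁻¹ := by
    rw [Kgain, transpose_mul, transpose_transpose, transpose_nonsing_inv,
      (Rop_isSymm σ B Bbar hP).eq]
  rw [closedLoop_eq σ A Abar B Bbar hP, hKt, Kgain, Matrix.mul_assoc S R⁻¹ R,
    nonsing_inv_mul R hR, Matrix.mul_one, Phi]
  simp only [Matrix.mul_assoc]
  abel

lemma Phi_posSemidef {P : Matrix (Fin n) (Fin n) ℝ} (hP : P.PosSemidef)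
    (hR : IsUnit (Rop σ B Bbar P).det) : (Phi σ A Abar B Bbar P).PosSemidef := by
  rw [Phi_eq_closedLoop σ A Abar B Bbar (isHermitian_iff_isSymm.mp hP.isHermitian) hR]
  simp only [← conjTranspose_eq_transpose_of_trivial]
  exact (hP.conjTranspose_mul_mul_same _).add
    ((hP.conjTranspose_mul_mul_same _).smul (sq_nonneg σ))

lemma sub_Phi_posSemidef {P : Matrix (Fin n) (Fin n) ℝ} (hR : (Rop σ B Bbar P).PosDef) :
    (Aᵀ * P * A + σ ^ 2 • (Abarᵀ * P * Abar) - Phi σ A Abar B Bbar P).PosSemidef := by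
  rw [Phi, sub_sub_cancel]
  simpa using hR.inv.posSemidef.mul_mul_conjTranspose_same (Sop σ A Abar B Bbar P)

lemma trace_Phi_le {P : Matrix (Fin n) (Fin n) ℝ} (hP : P.PosSemidef)
    (hR : (Rop σ B Bbar P).PosDef) :
    (Phi σ A Abar B Bbar P).trace ≤ lamMax (A * Aᵀ + σ ^ 2 • (Abar * Abarᵀ)) * P.trace :=
  calc (Phi σ A Abar B Bbar P).trace
      ≤ (Aᵀ * P * A + σ ^ 2 • (Abarᵀ * P * Abar)).trace := by
        have := (sub_Phi_posSemidef σ A Abar B Bbar hR).trace_nonneg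
        rwa [trace_sub, sub_nonneg] at this
    _ = (P * (A * Aᵀ + σ ^ 2 • (Abar * Abarᵀ))).trace := by
        rw [Matrix.mul_add, Matrix.mul_smul, trace_add, trace_add, trace_smul, trace_smul,
          trace_mul_cycle, trace_mul_cycle Abarᵀ, trace_mul_comm, trace_mul_comm (Abar * Abarᵀ)]
    _ ≤ lamMax (A * Aᵀ + σ ^ 2 • (Abar * Abarᵀ)) * P.trace :=
        trace_mul_le_lamMax_mul_trace hP _

end Riccati

theorem phi_psd_trace_bound_general {n m : ℕ}
    (σ : ℝ)
    (A Abar : Matrix (Fin n) (Fin n) ℝ) (B Bbar : Matrix (Fin n) (Fin m) ℝ)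
    (P : Matrix (Fin n) (Fin n) ℝ) (hP : P.PosSemidef)
    (hR : (Rop σ B Bbar P).PosDef) :
    (Phi σ A Abar B Bbar P).PosSemidef ∧
    (Aᵀ * P * A + σ ^ 2 • (Abarᵀ * P * Abar) - Phi σ A Abar B Bbar P).PosSemidef ∧
    Matrix.trace (Phi σ A Abar B Bbar P)
      ≤ lamMax (A * Aᵀ + σ ^ 2 • (Abar * Abarᵀ)) * Matrix.trace P :=
  ⟨Phi_posSemidef σ A Abar B Bbar hP hR.det_pos.ne'.isUnit,
    sub_Phi_posSemidef σ A Abar B Bbar hR, trace_Phi_le σ A Abar B Bbar hP hR⟩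

/-- For `P ⪰ 0` with `R(P) ≻ 0`: `Φ(P)` is symmetric positive
semidefinite, `Φ(P) ⪯ AᵀPA + σ²·ĀᵀPĀ`, and
`Tr Φ(P) ≤ λ_max(AAᵀ + σ²·ĀĀᵀ)·Tr P`. -/
theorem phi_psd_trace_bound {n m : ℕ} (hn : 0 < n) (hm : 0 < m)
    (σ : ℝ) (hσ : 0 < σ)
    (A Abar : Matrix (Fin n) (Fin n) ℝ) (B Bbar : Matrix (Fin n) (Fin m) ℝ)
    (P : Matrix (Fin n) (Fin n) ℝ) (hP : P.PosSemidef)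
    (hR : (Rop σ B Bbar P).PosDef) :
    (Phi σ A Abar B Bbar P).PosSemidef ∧
    (Aᵀ * P * A + σ ^ 2 • (Abarᵀ * P * Abar) - Phi σ A Abar B Bbar P).PosSemidef ∧
    Matrix.trace (Phi σ A Abar B Bbar P)
      ≤ lamMax (A * Aᵀ + σ ^ 2 • (Abar * Abarᵀ)) * Matrix.trace P :=
  phi_psd_trace_bound_general σ A Abar B Bbar P hP hR

end SCS
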